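/- arXiv:1604.02760 — 4 statements merged into one kernel-verified Lean document; each statement's English description precedes it below -/
import Mathlib

section
/- Let Δ = {(x,y) ∈ ℝ² : x + y < 1, 0 < x, 0 < y} and g(x,y) = ((1-x-y)/(x+y))·((1-y)/y). Then the set C_g = {(x,y) ∈ Δ : x + 2y - xy - y² < 3/4} is convex. -/
/-!
Writing `u = 1 - y` and `v = 1 - x - y`, the inequality `x + 2y - xy - y² < 3/4` becomes
`u v > 1/4`. So `C_g` is the open positive quadrant intersected with the preimage, under an affine
map, of the region `{u > 0, v > 0, u v > c}` above a hyperbola, which is convex by AM-GM.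
-/

open Set

theorem convex_setOf_pos_pos_lt_mul (c : ℝ) :
    Convex ℝ {q : ℝ × ℝ | 0 < q.1 ∧ 0 < q.2 ∧ c < q.1 * q.2} := by
  refine convex_iff_forall_pos.2 ?_
  rintro ⟨u₁, v₁⟩ ⟨hu₁, hv₁, hc₁⟩ ⟨u₂, v₂⟩ ⟨hu₂, hv₂, hc₂⟩ a b ha hb hab
  simp only [mem_ofPred_eq, Prod.smul_mk, Prod.mk_add_mk, smul_eq_mul] at *
  refine ⟨by positivity, by positivity, ?_⟩
  -- AM-GM: `u₁ v₂ + u₂ v₁ ≥ 2 √(u₁ v₁ u₂ v₂) > 2c`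
  have hcross : 2 * c < u₁ * v₂ + u₂ * v₁ := by
    rcases le_or_gt c 0 with hc | hc
    · nlinarith [mul_pos hu₁ hv₂, mul_pos hu₂ hv₁]
    · have hsq : (2 * c) ^ 2 < (u₁ * v₂ + u₂ * v₁) ^ 2 := by
        nlinarith [sq_nonneg (u₁ * v₂ - u₂ * v₁), mul_lt_mul'' hc₁ hc₂ hc.le hc.le]
      exact lt_of_pow_lt_pow_left₀ 2 (by positivity) hsq
  calc c = a ^ 2 * c + b ^ 2 * c + a * b * (2 * c) := by
        linear_combination (-c * (a + b + 1)) * hab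
    _ < a ^ 2 * (u₁ * v₁) + b ^ 2 * (u₂ * v₂) + a * b * (u₁ * v₂ + u₂ * v₁) := by
        gcongr
    _ = (a * u₁ + b * u₂) * (a * v₁ + b * v₂) := by ring

theorem AffineMap.convex_setOf_pos_pos_lt_mul {E : Type*} [AddCommGroup E] [Module ℝ E]
    (f g : E →ᵃ[ℝ] ℝ) (c : ℝ) :
    Convex ℝ {x | 0 < f x ∧ 0 < g x ∧ c < f x * g x} :=
  (_root_.convex_setOf_pos_pos_lt_mul c).affine_preimage (f.prod g)

/-- The set `C_g = {(x,y) ∈ Δ : x + 2y - xy - y² < 3/4}`, where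
`Δ = {(x,y) : x + y < 1, 0 < x, 0 < y}`, is convex. -/
theorem Cg_convex :
    Convex ℝ {p : ℝ × ℝ |
      (p.1 + p.2 < 1 ∧ 0 < p.1 ∧ 0 < p.2) ∧
      p.1 + 2 * p.2 - p.1 * p.2 - p.2 ^ 2 < 3 / 4} := by
  let u : ℝ × ℝ →ᵃ[ℝ] ℝ := AffineMap.const ℝ _ 1 - (LinearMap.snd ℝ ℝ ℝ).toAffineMap
  let v : ℝ × ℝ →ᵃ[ℝ] ℝ := u - (LinearMap.fst ℝ ℝ ℝ).toAffineMap
  have hset : {p : ℝ × ℝ | (p.1 + p.2 < 1 ∧ 0 < p.1 ∧ 0 < p.2) ∧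
      p.1 + 2 * p.2 - p.1 * p.2 - p.2 ^ 2 < 3 / 4} =
      Ioi 0 ×ˢ Ioi 0 ∩ {p | 0 < u p ∧ 0 < v p ∧ 1 / 4 < u p * v p} := by
    ext ⟨x, y⟩
    simp only [u, v, mem_ofPred_eq, mem_inter_iff, mem_prod, mem_Ioi, AffineMap.coe_sub,
      AffineMap.coe_const, LinearMap.coe_toAffineMap, Pi.sub_apply, Function.const_apply,
      LinearMap.coe_fst, LinearMap.coe_snd]
    constructor
    · rintro ⟨⟨hxy, hx, hy⟩, h⟩
      exact ⟨⟨hx, hy⟩, by linarith, by linarith, by nlinarith⟩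
    · rintro ⟨⟨hx, hy⟩, -, hv, h⟩
      exact ⟨⟨by linarith, hx, hy⟩, by nlinarith⟩
  rw [hset]
  exact ((convex_Ioi 0).prod (convex_Ioi 0)).inter (u.convex_setOf_pos_pos_lt_mul v _)
end

section
/- Let Δ = {(x,y) ∈ ℝ² : x + y < 1, 0 < x, 0 < y} and g(x,y) = ((1-x-y)/(x+y))·((1-y)/y). Then g is strictly convex on the open convex set C_g = {(x,y) ∈ Δ : x + 2y - xy - y² < 3/4}. -/
/-!
Write `odds t = t / (1 - t)`. In the affine coordinates `a = 1 - x - y`, `b = 1 - y` one has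
`g = odds a * odds b`, and `x + 2y - xy - y² = 1 - ab`, so `C_g` lies in the convex region
`ab > 1/4`, `a, b < 1`. Along a line with direction `(α, β)` the second derivative of
`odds a * odds b` is a binary quadratic form in `(α, β)` whose discriminant is a positive
multiple of `1 - 4ab`, so it is positive definite on that region.
-/

open Set Filter Topology

section Convexity

variable {𝕜 E F β : Type*} [Field 𝕜] [LinearOrder 𝕜]
  [AddCommGroup E] [AddCommGroup F] [Module 𝕜 E] [Module 𝕜 F]
  [AddCommMonoid β] [PartialOrder β] [SMul 𝕜 β]

theorem StrictConvexOn.comp_affineMap_of_injective {f : F → β} {s : Set F}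
    (hf : StrictConvexOn 𝕜 s f) (g : E →ᵃ[𝕜] F) (hg : Function.Injective g) :
    StrictConvexOn 𝕜 (g ⁻¹' s) (f ∘ g) :=
  ⟨hf.1.affine_preimage g, fun x hx y hy hxy a b ha hb hab => by
    simpa only [Function.comp_apply, Convex.combo_affine_apply hab] using
      hf.2 hx hy (hg.ne hxy) ha hb hab⟩

theorem strictConvexOn_of_comp_lineMap [IsStrictOrderedRing 𝕜] {s : Set E} {f : E → β}
    (hs : Convex 𝕜 s)
    (h : ∀ p ∈ s, ∀ q ∈ s, p ≠ q → StrictConvexOn 𝕜 (Icc (0 : 𝕜) 1) (f ∘ AffineMap.lineMap p q)) :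
    StrictConvexOn 𝕜 s f := by
  refine ⟨hs, fun p hp q hq hpq a b ha hb hab => ?_⟩
  obtain rfl : a = 1 - b := eq_sub_of_add_eq hab
  simpa [AffineMap.lineMap_apply_module] using
    (h p hp q hq hpq).2 (left_mem_Icc.2 zero_le_one) (right_mem_Icc.2 zero_le_one) zero_ne_one
      ha hb hab

end Convexity

theorem convex_setOf_lt_mul (c : ℝ) :
    Convex ℝ {w : ℝ × ℝ | 0 < w.1 ∧ 0 < w.2 ∧ c < w.1 * w.2} := by
  rintro ⟨a₁, b₁⟩ ⟨ha₁, hb₁, h₁⟩ ⟨a₂, b₂⟩ ⟨ha₂, hb₂, h₂⟩ s t hs ht hst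
  dsimp only at *
  have ha : 0 < s * a₁ + t * a₂ := convex_Ioi (0 : ℝ) ha₁ ha₂ hs ht hst
  have hb : 0 < s * b₁ + t * b₂ := convex_Ioi (0 : ℝ) hb₁ hb₂ hs ht hst
  refine ⟨ha, hb, ?_⟩
  show c < (s * a₁ + t * a₂) * (s * b₁ + t * b₂)
  rcases le_or_gt c 0 with hc | hc
  · exact hc.trans_lt (mul_pos ha hb)
  -- AM-GM: `(a₁ b₂ + a₂ b₁)² ≥ 4 (a₁ b₁) (a₂ b₂) > 4 c²`
  have hcross : 2 * c < a₁ * b₂ + a₂ * b₁ := by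
    have hpos : 0 < a₁ * b₂ + a₂ * b₁ := by positivity
    nlinarith [sq_nonneg (a₁ * b₂ - a₂ * b₁), mul_lt_mul'' h₁ h₂ hc.le hc.le]
  have hexp : (s * a₁ + t * a₂) * (s * b₁ + t * b₂) - c * (s + t) ^ 2
      = s ^ 2 * (a₁ * b₁ - c) + t ^ 2 * (a₂ * b₂ - c) + s * t * (a₁ * b₂ + a₂ * b₁ - 2 * c) := by
    ring
  rw [hst] at hexp
  rcases hs.lt_or_eq with hs | rfl
  · nlinarith [mul_nonneg ht ht, mul_nonneg hs.le ht, mul_pos hs hs]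
  · simp_all

theorem quadratic_form_pos {P M Q α β : ℝ} (hP : 0 < P) (hdisc : M ^ 2 < P * Q)
    (hαβ : α ≠ 0 ∨ β ≠ 0) : 0 < P * α ^ 2 + 2 * M * α * β + Q * β ^ 2 := by
  rcases eq_or_ne β 0 with rfl | hβ
  · have hα : α ≠ 0 := by simpa using hαβ
    simpa using mul_pos hP (sq_pos_of_ne_zero hα)
  · have hsq : P * (P * α ^ 2 + 2 * M * α * β + Q * β ^ 2)
        = (P * α + M * β) ^ 2 + (P * Q - M ^ 2) * β ^ 2 := by ring
    refine pos_of_mul_pos_right (hsq ▸ ?_) hP.le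
    have := mul_pos (sub_pos.2 hdisc) (sq_pos_of_ne_zero hβ)
    positivity

theorem HasDerivAt.comp_add_mul {F : ℝ → ℝ} {d a α r : ℝ} (h : HasDerivAt F d (a + r * α)) :
    HasDerivAt (fun r => F (a + r * α)) (d * α) r := by
  have := h.comp r (((hasDerivAt_id r).mul_const α).const_add a)
  simpa only [Function.comp_def, id, one_mul] using this

section ProductAlongLine

variable {F G F' F'' : ℝ → ℝ} {U : Set ℝ} {a b α β r dF dG : ℝ}

theorem HasDerivAt.mul_comp_add_mul (hF : HasDerivAt F dF (a + r * α))
    (hG : HasDerivAt G dG (b + r * β)) :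
    HasDerivAt (fun r => F (a + r * α) * G (b + r * β))
      (α * (dF * G (b + r * β)) + β * (F (a + r * α) * dG)) r :=
  (hF.comp_add_mul.fun_mul hG.comp_add_mul).congr_deriv (by ring)

theorem deriv2_mul_comp_add_mul (hU : IsOpen U) (hF : ∀ t ∈ U, HasDerivAt F (F' t) t)
    (hF' : ∀ t ∈ U, HasDerivAt F' (F'' t) t) (ha : a + r * α ∈ U) (hb : b + r * β ∈ U) :
    deriv^[2] (fun r => F (a + r * α) * F (b + r * β)) r =
      F'' (a + r * α) * F (b + r * β) * α ^ 2
        + 2 * (F' (a + r * α) * F' (b + r * β)) * α * β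
        + F (a + r * α) * F'' (b + r * β) * β ^ 2 := by
  have hnhds : ∀ᶠ s in 𝓝 r, a + s * α ∈ U ∧ b + s * β ∈ U :=
    ((hU.preimage (by fun_prop : Continuous fun s => a + s * α)).inter
      (hU.preimage (by fun_prop : Continuous fun s => b + s * β))).mem_nhds ⟨ha, hb⟩
  have hderiv : deriv (fun r => F (a + r * α) * F (b + r * β)) =ᶠ[𝓝 r]
      fun s => α * (F' (a + s * α) * F (b + s * β)) + β * (F (a + s * α) * F' (b + s * β)) :=
    hnhds.mono fun s hs => ((hF _ hs.1).mul_comp_add_mul (hF _ hs.2)).deriv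
  rw [Function.iterate_succ_apply, Function.iterate_one, hderiv.deriv_eq]
  refine ((((hF' _ ha).mul_comp_add_mul (hF _ hb)).const_mul α).add
    (((hF _ ha).mul_comp_add_mul (hF' _ hb)).const_mul β)).deriv.trans ?_
  ring

end ProductAlongLine

noncomputable def odds (t : ℝ) : ℝ := t / (1 - t)

theorem hasDerivAt_odds {t : ℝ} (ht : t ≠ 1) : HasDerivAt odds (1 / (1 - t) ^ 2) t := by
  have h : 1 - t ≠ 0 := sub_ne_zero.2 ht.symm
  refine ((hasDerivAt_id' t).fun_div ((hasDerivAt_id' t).const_sub 1) h).congr_deriv ?_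
  field_simp
  ring

theorem hasDerivAt_one_div_one_sub_sq {t : ℝ} (ht : t ≠ 1) :
    HasDerivAt (fun t => 1 / (1 - t) ^ 2) (2 / (1 - t) ^ 3) t := by
  have h : 1 - t ≠ 0 := sub_ne_zero.2 ht.symm
  refine ((hasDerivAt_const t 1).fun_div (((hasDerivAt_id' t).const_sub 1).fun_pow 2)
    (pow_ne_zero 2 h)).congr_deriv ?_
  field_simp
  ring

theorem odds_hessian_pos {A B α β : ℝ} (hB : 0 < B) (hA₁ : A < 1) (hB₁ : B < 1)
    (hAB : 1 / 4 < A * B) (hαβ : α ≠ 0 ∨ β ≠ 0) :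
    0 < 2 / (1 - A) ^ 3 * odds B * α ^ 2 + 2 * (1 / (1 - A) ^ 2 * (1 / (1 - B) ^ 2)) * α * β
      + odds A * (2 / (1 - B) ^ 3) * β ^ 2 := by
  have hA' : 0 < 1 - A := by linarith
  have hB' : 0 < 1 - B := by linarith
  refine quadratic_form_pos (by unfold odds; positivity) ?_ hαβ
  have hdisc : 2 / (1 - A) ^ 3 * odds B * (odds A * (2 / (1 - B) ^ 3))
      - (1 / (1 - A) ^ 2 * (1 / (1 - B) ^ 2)) ^ 2
        = (4 * (A * B) - 1) / ((1 - A) ^ 4 * (1 - B) ^ 4) := by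
    unfold odds
    field_simp
    ring
  exact sub_pos.1 (hdisc ▸ div_pos (by linarith) (by positivity))

theorem strictConvexOn_odds_mul_odds :
    StrictConvexOn ℝ ({w : ℝ × ℝ | 0 < w.1 ∧ 0 < w.2 ∧ 1 / 4 < w.1 * w.2} ∩ Iio 1 ×ˢ Iio 1)
      (fun w => odds w.1 * odds w.2) := by
  have hconv := (convex_setOf_lt_mul (1 / 4)).inter ((convex_Iio (1 : ℝ)).prod (convex_Iio 1))
  refine strictConvexOn_of_comp_lineMap hconv fun p hp q hq hpq => ?_
  have hline : ∀ r : ℝ, AffineMap.lineMap p q r = (p.1 + r * (q.1 - p.1), p.2 + r * (q.2 - p.2)) :=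
    fun r => by
      ext <;> simp only [AffineMap.lineMap_apply_module', Prod.fst_add, Prod.snd_add,
        Prod.smul_fst, Prod.smul_snd, Prod.fst_sub, Prod.snd_sub, smul_eq_mul] <;> ring
  have hseg : ∀ r ∈ Icc (0 : ℝ) 1, 0 < p.2 + r * (q.2 - p.2) ∧ p.1 + r * (q.1 - p.1) < 1 ∧
      p.2 + r * (q.2 - p.2) < 1 ∧ 1 / 4 < (p.1 + r * (q.1 - p.1)) * (p.2 + r * (q.2 - p.2)) :=
    fun r hr => by
      obtain ⟨⟨-, h₂, h₁₂⟩, h₁, h₂'⟩ := hline r ▸ hconv.lineMap_mem hp hq hr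
      exact ⟨h₂, h₁, h₂', h₁₂⟩
  have hdir : q.1 - p.1 ≠ 0 ∨ q.2 - p.2 ≠ 0 := by
    by_contra! h
    exact hpq (Prod.ext (sub_eq_zero.1 h.1).symm (sub_eq_zero.1 h.2).symm)
  have hodds : ∀ t ∈ Iio (1 : ℝ), HasDerivAt odds (1 / (1 - t) ^ 2) t :=
    fun t ht => hasDerivAt_odds (ne_of_lt ht)
  simp only [Function.comp_def, hline]
  refine strictConvexOn_of_deriv2_pos (convex_Icc 0 1) (fun r hr => ?_) fun r hr => ?_
  · obtain ⟨-, h₁, h₂, -⟩ := hseg r hr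
    exact ((hodds _ h₁).mul_comp_add_mul (hodds _ h₂)).continuousAt.continuousWithinAt
  · obtain ⟨hB, h₁, h₂, hAB⟩ := hseg r (interior_subset hr)
    rw [deriv2_mul_comp_add_mul isOpen_Iio hodds
      (fun t ht => hasDerivAt_one_div_one_sub_sq (ne_of_lt ht)) h₁ h₂]
    exact odds_hessian_pos hB h₁ h₂ hAB hdir

noncomputable def complCoords : ℝ × ℝ →ᵃ[ℝ] ℝ × ℝ :=
  AffineMap.const ℝ _ (1, 1)
    - ((LinearMap.fst ℝ ℝ ℝ + LinearMap.snd ℝ ℝ ℝ).prod (LinearMap.snd ℝ ℝ ℝ)).toAffineMap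

theorem complCoords_apply (p : ℝ × ℝ) : complCoords p = (1 - p.1 - p.2, 1 - p.2) := by
  ext
  · simp [complCoords, sub_sub]
  · simp [complCoords]

theorem complCoords_injective : Function.Injective complCoords := fun p q hpq => by
  rw [complCoords_apply, complCoords_apply, Prod.ext_iff] at hpq
  exact Prod.ext (by linarith [hpq.1, hpq.2]) (by linarith [hpq.2])

/-- The function `g(x,y) = ((1-x-y)/(x+y)) · ((1-y)/y)` is strictly convex on the open
convex set `C_g = {(x,y) ∈ Δ : x + 2y - xy - y² < 3/4}`, where
`Δ = {(x,y) : x + y < 1, 0 < x, 0 < y}`. -/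
theorem g_strictConvexOn_Cg :
    StrictConvexOn ℝ
      {p : ℝ × ℝ |
        (p.1 + p.2 < 1 ∧ 0 < p.1 ∧ 0 < p.2) ∧
        p.1 + 2 * p.2 - p.1 * p.2 - p.2 ^ 2 < 3 / 4}
      (fun p : ℝ × ℝ => ((1 - p.1 - p.2) / (p.1 + p.2)) * ((1 - p.2) / p.2)) := by
  have hCg : {p : ℝ × ℝ | (p.1 + p.2 < 1 ∧ 0 < p.1 ∧ 0 < p.2) ∧
        p.1 + 2 * p.2 - p.1 * p.2 - p.2 ^ 2 < 3 / 4}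
      = complCoords ⁻¹' ({w : ℝ × ℝ | 0 < w.1 ∧ 0 < w.2 ∧ 1 / 4 < w.1 * w.2} ∩ Iio 1 ×ˢ Iio 1)
        ∩ {p | 0 < p.1} := by
    ext p
    simp only [mem_inter_iff, mem_preimage, complCoords_apply, mem_prod, mem_Iio]
    constructor
    · rintro ⟨⟨h₁, h₂, h₃⟩, h₄⟩
      exact ⟨⟨⟨by linarith, by linarith, by nlinarith⟩, by linarith, by linarith⟩, h₂⟩
    · rintro ⟨⟨⟨h₁, -, h₃⟩, -, h₅⟩, h₆⟩
      exact ⟨⟨by linarith, h₆, by linarith⟩, by nlinarith⟩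
  have hg : (fun p : ℝ × ℝ => ((1 - p.1 - p.2) / (p.1 + p.2)) * ((1 - p.2) / p.2))
      = (fun w => odds w.1 * odds w.2) ∘ complCoords := by
    funext p
    rw [Function.comp_apply, complCoords_apply, odds, odds,
      show 1 - (1 - p.1 - p.2) = p.1 + p.2 by ring, show 1 - (1 - p.2) = p.2 by ring]
  have hK := strictConvexOn_odds_mul_odds.comp_affineMap_of_injective _ complCoords_injective
  rw [hCg, hg]
  exact hK.subset inter_subset_left
    (hK.1.inter (convex_halfSpace_gt (LinearMap.fst ℝ ℝ ℝ).isLinear 0))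
end

section
/- Let α > 9 satisfy 21α⁴ - 496α³ - 654α² + 24α + 81 = 0. Set x₁ = 3/(3+α), x₂ = x₃ = 3(α-1)/(21α²+14α-3), and x₇ = 1/(1+3α). Then ((1 - 2(x₁+x₂+x₃) - x₇)/(2(x₁+x₂+x₃)+x₇)) · ((1-x₁)/x₁) = α. -/
/-!
Since `(1 - x₁) / x₁ = α / 3`, the claim amounts to `(1 - s) / s = 3` for
`s = 2 (x₁ + x₂ + x₃) + x₇`, i.e. to `s = 1 / 4`. This is exactly the quartic equation:
`4 (3 + α)(1 + 3α)(21α² + 14α - 3)(s - 1/4) = -3 (21α⁴ - 496α³ - 654α² + 24α + 81)`.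
-/

lemma one_sub_div_div_self (a c : ℝ) (hc : c ≠ 0) (hca : c + a ≠ 0) :
    (1 - c / (c + a)) / (c / (c + a)) = a / c := by
  field_simp
  ring

lemma weighted_sum_eq_quarter_of_root {α : ℝ} (hα : 1 ≤ α)
    (hroot : 21 * α ^ 4 - 496 * α ^ 3 - 654 * α ^ 2 + 24 * α + 81 = 0) :
    2 * (3 / (3 + α) + 3 * (α - 1) / (21 * α ^ 2 + 14 * α - 3)
      + 3 * (α - 1) / (21 * α ^ 2 + 14 * α - 3)) + 1 / (1 + 3 * α) = 1 / 4 := by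
  have hA : 3 + α ≠ 0 := by positivity
  have hC : 1 + 3 * α ≠ 0 := by positivity
  -- abstracted so that `field_simp` does not reshape the quadratic before using `hB`
  set B := 21 * α ^ 2 + 14 * α - 3 with hB_def
  have hB : B ≠ 0 := by nlinarith
  field_simp
  rw [hB_def]
  linear_combination (-3 : ℝ) * hroot

/-- For `α > 9` a root of `21x⁴-496x³-654x²+24x+81`, with `x₁ = 3/(3+α)`,
`x₂ = x₃ = 3(α-1)/(21α²+14α-3)` and `x₇ = 1/(1+3α)`, one has
`((1 - 2(x₁+x₂+x₃) - x₇)/(2(x₁+x₂+x₃)+x₇)) · ((1-x₁)/x₁) = α`. -/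
theorem f1_at_xstar (α : ℝ) (hα9 : 9 < α)
    (hαroot : 21 * α ^ 4 - 496 * α ^ 3 - 654 * α ^ 2 + 24 * α + 81 = 0)
    (x₁ x₂ x₃ x₇ : ℝ) (hx₁ : x₁ = 3 / (3 + α))
    (hx₂ : x₂ = 3 * (α - 1) / (21 * α ^ 2 + 14 * α - 3))
    (hx₃ : x₃ = 3 * (α - 1) / (21 * α ^ 2 + 14 * α - 3))
    (hx₇ : x₇ = 1 / (1 + 3 * α)) :
    ((1 - 2 * (x₁ + x₂ + x₃) - x₇) / (2 * (x₁ + x₂ + x₃) + x₇)) * ((1 - x₁) / x₁) = α := by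
  subst hx₁ hx₂ hx₃ hx₇
  rw [sub_sub, weighted_sum_eq_quarter_of_root (by linarith) hαroot,
    one_sub_div_div_self α 3 three_ne_zero (by linarith)]
  ring
end

section
/- Let α = 24.8692... be the real root of 21x⁴-496x³-654x²+24x+81 greater than 9, and let x* ∈ Δ²⁷ have coordinates x*ₗ = 3/(3+α) for l ∈ {1,5,9,13,15,19,23,27}, x*ₗ = 1/(1+3α) for l ∈ {7,14,21,28}, and x*ₗ = 3(α-1)/(21α²+14α-3) otherwise. Then for g₁(x) = ((1 - Σ_{l∉{8,9,10}} xₗ)/(Σ_{l∉{8,9,10}} xₗ))·((1-x₁)/x₁) one has g₁(x*) < α. -/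
/-! Since `α < 25`, the seven coordinates `3/(3+α)` counted in `S = Σ_{l∉{8,9,10}} x*ₗ` already
exceed `1/4`, so `(1 - S)/S < 3`; and `(1 - x*₁)/x*₁ = α/3` exactly. -/

theorem quartic_root_lt_25 {α : ℝ}
    (hαroot : 21 * α ^ 4 - 496 * α ^ 3 - 654 * α ^ 2 + 24 * α + 81 = 0) : α < 25 := by
  nlinarith [sq_nonneg (α - 9), sq_nonneg (α - 25), sq_nonneg (α * α - 25 * α)]

theorem sum_filter_xstar_pattern (a b c : ℝ) :
    ∑ l ∈ Finset.univ.filter (fun l : Fin 28 => l.val + 1 ∉ ({8, 9, 10} : Finset ℕ)),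
      (if l.val + 1 ∈ ({1, 5, 9, 13, 15, 19, 23, 27} : Finset ℕ) then a
        else if l.val + 1 ∈ ({7, 14, 21, 28} : Finset ℕ) then b else c)
      = 7 * a + 4 * b + 14 * c := by
  rw [Finset.sum_filter]
  norm_num [Fin.sum_univ_succ]
  ring

theorem one_sub_div_lt_three {S : ℝ} (hS : 1 / 4 < S) : (1 - S) / S < 3 := by
  rw [div_lt_iff₀ (by linarith)]
  linarith

theorem one_sub_div_div_eq {c t : ℝ} (hc : c ≠ 0) (hct : c + t ≠ 0) :
    (1 - c / (c + t)) / (c / (c + t)) = t / c := by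
  field_simp
  ring

/-- Let `α` be the real root of `21x⁴-496x³-654x²+24x+81` greater than `9`, and let
`x* ∈ Δ²⁷` have (1-based) coordinates `3/(3+α)` at indices `{1,5,9,13,15,19,23,27}`,
`1/(1+3α)` at indices `{7,14,21,28}`, and `3(α-1)/(21α²+14α-3)` otherwise.  Then for
`g₁(x) = ((1 - Σ_{l∉{8,9,10}} xₗ)/(Σ_{l∉{8,9,10}} xₗ)) · ((1-x₁)/x₁)` one has
`g₁(x*) < α`. -/
theorem g1_at_xstar_lt (α : ℝ) (hα9 : 9 < α)
    (hαroot : 21 * α ^ 4 - 496 * α ^ 3 - 654 * α ^ 2 + 24 * α + 81 = 0) :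
    let x : Fin 28 → ℝ := fun l =>
      if l.val + 1 ∈ ({1, 5, 9, 13, 15, 19, 23, 27} : Finset ℕ) then 3 / (3 + α)
      else if l.val + 1 ∈ ({7, 14, 21, 28} : Finset ℕ) then 1 / (1 + 3 * α)
      else 3 * (α - 1) / (21 * α ^ 2 + 14 * α - 3)
    ((1 - ∑ l ∈ Finset.univ.filter (fun l : Fin 28 => l.val + 1 ∉ ({8, 9, 10} : Finset ℕ)), x l) /
        (∑ l ∈ Finset.univ.filter (fun l : Fin 28 => l.val + 1 ∉ ({8, 9, 10} : Finset ℕ)), x l)) *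
      ((1 - x 0) / x 0) < α := by
  intro x
  have hα25 := quartic_root_lt_25 hαroot
  have hx0 : x 0 = 3 / (3 + α) := by norm_num [x]
  rw [sum_filter_xstar_pattern, hx0, one_sub_div_div_eq three_ne_zero (by linarith)]
  have hS : 1 / 4 < 7 * (3 / (3 + α)) + 4 * (1 / (1 + 3 * α))
      + 14 * (3 * (α - 1) / (21 * α ^ 2 + 14 * α - 3)) := by
    have hA : 1 / 4 < 7 * (3 / (3 + α)) := by
      rw [mul_div_assoc', lt_div_iff₀ (by linarith)]
      linarith
    have hB : 0 < 4 * (1 / (1 + 3 * α)) := by positivity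
    have hC : 0 ≤ 14 * (3 * (α - 1) / (21 * α ^ 2 + 14 * α - 3)) :=
      mul_nonneg (by norm_num) (div_nonneg (by linarith) (by nlinarith))
    linarith
  calc _ < 3 * (α / 3) := mul_lt_mul_of_pos_right (one_sub_div_lt_three hS) (by linarith)
    _ = α := by ring
end
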